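/- arXiv:2101.00653 — 2 statements merged into one kernel-verified Lean document; each statement's English description precedes it below -/
import Mathlib

section
/- If X is a finite-dimensional linear 2-normed space over ℝ, then every b-linear functional on X × ⟨b⟩ is b-sequentially continuous. -/
open Filter Topology

/-- A linear 2-normed space structure (Gähler): a 2-norm on a real vector space. -/
structure TwoNorm (X : Type*) [AddCommGroup X] [Module ℝ X] where
  N : X → X → ℝ
  eq_zero_iff : ∀ x y, N x y = 0 ↔ ¬ LinearIndependent ℝ ![x, y]
  symm : ∀ x y, N x y = N y x
  smul_left : ∀ (a : ℝ) (x y : X), N (a • x) y = |a| * N x y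
  add_right : ∀ x y z : X, N x (y + z) ≤ N x y + N x z

variable {X : Type*} [AddCommGroup X] [Module ℝ X]

/-- Convergence of a sequence in a linear 2-normed space. -/
def TwoNorm.Conv (P : TwoNorm X) (x : ℕ → X) (l : X) : Prop :=
  ∀ y : X, Tendsto (fun n => P.N (x n - l) y) atTop (nhds 0)

/-- Cauchy sequence in a linear 2-normed space. -/
def TwoNorm.IsCauchySeq (P : TwoNorm X) (x : ℕ → X) : Prop :=
  ∀ z : X, Tendsto (fun p : ℕ × ℕ => P.N (x p.1 - x p.2) z) atTop (nhds 0)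

/-- A 2-Banach space: every Cauchy sequence converges. -/
def TwoNorm.Complete (P : TwoNorm X) : Prop :=
  ∀ x : ℕ → X, P.IsCauchySeq x → ∃ l, P.Conv x l

/-- A b-linear functional (identified with `x ↦ T (x, b)`, a linear map) is bounded. -/
def TwoNorm.BddB (P : TwoNorm X) (b : X) (T : X →ₗ[ℝ] ℝ) : Prop :=
  ∃ M : ℝ, 0 < M ∧ ∀ x, |T x| ≤ M * P.N x b

/-- Norm of a bounded b-linear functional. -/
noncomputable def TwoNorm.bNorm (P : TwoNorm X) (b : X) (T : X →ₗ[ℝ] ℝ) : ℝ :=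
  sInf {M : ℝ | 0 < M ∧ ∀ x, |T x| ≤ M * P.N x b}

/-- Boundedness of a b-linear functional defined on a subspace `W`. -/
def TwoNorm.BddBOn (P : TwoNorm X) (b : X) (W : Submodule ℝ X) (T : W →ₗ[ℝ] ℝ) : Prop :=
  ∃ M : ℝ, 0 < M ∧ ∀ x : W, |T x| ≤ M * P.N x b

/-- Norm of a bounded b-linear functional defined on a subspace `W`. -/
noncomputable def TwoNorm.bNormOn (P : TwoNorm X) (b : X) (W : Submodule ℝ X)
    (T : W →ₗ[ℝ] ℝ) : ℝ :=
  sInf {M : ℝ | 0 < M ∧ ∀ x : W, |T x| ≤ M * P.N x b}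

/-- Continuity at a point with respect to the open-ball topology of the 2-norm. -/
def TwoNorm.ContAt (P : TwoNorm X) (T : X →ₗ[ℝ] ℝ) (x₀ : X) : Prop :=
  ∀ ε > 0, ∃ (e : X) (δ : ℝ), 0 < δ ∧ ∀ x, P.N (x - x₀) e < δ → |T x - T x₀| < ε

/-!
For a basis `e` of `X`, `v ↦ ∑ i, ‖v, e i‖` is a genuine norm once `dim X ≥ 2`: if it vanished
at `v ≠ 0`, every `e i` would be a multiple of `v`. Convergence in the 2-norm gives convergence
in this norm, and in finite dimensions every linear map is continuous for any norm.
-/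

namespace TwoNorm

variable (P : TwoNorm X)

lemma zero_left (y : X) : P.N 0 y = 0 := by
  simpa using P.smul_left 0 0 y

lemma neg_left (x y : X) : P.N (-x) y = P.N x y := by
  rw [← neg_one_smul ℝ x, P.smul_left, abs_neg, abs_one, one_mul]

lemma add_left (x y z : X) : P.N (x + y) z ≤ P.N x z + P.N y z := by
  simpa only [P.symm _ z] using P.add_right z x y

lemma nonneg (x y : X) : 0 ≤ P.N x y := by
  have h := P.add_left x (-x) y
  rw [add_neg_cancel, P.zero_left, P.neg_left] at h
  linarith

lemma mem_span_singleton_of_N_eq_zero {v y : X} (hv : v ≠ 0) (h : P.N v y = 0) :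
    y ∈ ℝ ∙ v := by
  have hdep := (P.eq_zero_iff v y).1 h
  rw [LinearIndependent.pair_iff' hv] at hdep
  exact Submodule.mem_span_singleton.2 (not_forall_not.1 hdep)

lemma eq_zero_of_forall_N_basis_eq_zero (hdim : 2 ≤ Module.finrank ℝ X) {ι : Type*}
    (e : Module.Basis ι ℝ X) {v : X} (h : ∀ i, P.N v (e i) = 0) : v = 0 := by
  by_contra hv
  have htop : (⊤ : Submodule ℝ X) ≤ ℝ ∙ v := by
    rw [← e.span_eq, Submodule.span_le]
    rintro _ ⟨i, rfl⟩
    exact P.mem_span_singleton_of_N_eq_zero hv (h i)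
  have hrank := Submodule.finrank_mono htop
  rw [finrank_top, finrank_span_singleton hv] at hrank
  omega

noncomputable def basisNorm (hdim : 2 ≤ Module.finrank ℝ X) {ι : Type*} [Fintype ι]
    (e : Module.Basis ι ℝ X) : AddGroupNorm X where
  toFun v := ∑ i, P.N v (e i)
  map_zero' := by simp only [P.zero_left, Finset.sum_const_zero]
  add_le' v w := by
    rw [← Finset.sum_add_distrib]
    exact Finset.sum_le_sum fun i _ => P.add_left v w (e i)
  neg' v := by simp only [P.neg_left]
  eq_zero_of_map_eq_zero' v hv := by
    refine P.eq_zero_of_forall_N_basis_eq_zero hdim e fun i => ?_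
    exact (Finset.sum_eq_zero_iff_of_nonneg fun j _ => P.nonneg v (e j)).1 hv i
      (Finset.mem_univ i)

theorem tendsto_map_of_conv [FiniteDimensional ℝ X] (hdim : 2 ≤ Module.finrank ℝ X)
    {F : Type*} [AddCommGroup F] [Module ℝ F] [TopologicalSpace F] [IsTopologicalAddGroup F]
    [ContinuousSMul ℝ F] (T : X →ₗ[ℝ] F) {x : ℕ → X} {l : X} (hx : P.Conv x l) :
    Tendsto (fun n => T (x n)) atTop (𝓝 (T l)) := by
  let e := Module.finBasis ℝ X
  let _ : NormedAddCommGroup X := (P.basisNorm hdim e).toNormedAddCommGroup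
  let _ : NormedSpace ℝ X := ⟨fun a v => by
    change ∑ i, P.N (a • v) (e i) ≤ ‖a‖ * ∑ i, P.N v (e i)
    simp only [P.smul_left, Real.norm_eq_abs, Finset.mul_sum, le_refl]⟩
  have hxl : Tendsto x atTop (𝓝 l) := by
    rw [tendsto_iff_norm_sub_tendsto_zero]
    have hsum := tendsto_finsetSum Finset.univ fun i _ => hx (e i)
    rw [Finset.sum_const_zero] at hsum
    exact hsum
  exact (T.continuous_of_finiteDimensional.tendsto l).comp hxl

end TwoNorm

theorem stmt8_general [FiniteDimensional ℝ X] (hdim : 2 ≤ Module.finrank ℝ X)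
    (P : TwoNorm X) (T : X →ₗ[ℝ] ℝ)
    (x : ℕ → X) (l : X) (hx : P.Conv x l) :
    Tendsto (fun n => T (x n)) atTop (nhds (T l)) :=
  P.tendsto_map_of_conv hdim T hx

theorem stmt8 [FiniteDimensional ℝ X] (hdim : 2 ≤ Module.finrank ℝ X)
    (P : TwoNorm X) (b : X) (T : X →ₗ[ℝ] ℝ)
    (x : ℕ → X) (l : X) (hx : P.Conv x l) :
    Tendsto (fun n => T (x n)) atTop (nhds (T l)) :=
  stmt8_general hdim P T x l hx
end

section
/- Norming functional: let X be a real linear 2-normed space, b ∈ X fixed, and x₀ a nonzero element of X with ‖x₀, b‖ ≠ 0. Then there exists a bounded b-linear functional T on X × ⟨b⟩ with ‖T‖ = 1 and T(x₀, b) = ‖x₀, b‖. -/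
open Filter Topology

variable {X : Type*} [AddCommGroup X] [Module ℝ X]

/-! Since `x ↦ ‖x, b‖` is a seminorm on `X`, the functional `c • x₀ ↦ c ‖x₀, b‖` on the line
through `x₀` is dominated by it, and Hahn–Banach extends it to all of `X` keeping the bound
`|T x| ≤ ‖x, b‖`. The value at `x₀` shows that no smaller constant works, so `‖T‖ = 1`. -/

theorem Seminorm.exists_dual_vector {E : Type*} [AddCommGroup E] [Module ℝ E]
    (p : Seminorm ℝ E) (x₀ : E) :
    ∃ g : Module.Dual ℝ E, g x₀ = p x₀ ∧ ∀ x, |g x| ≤ p x := by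
  have hker : ∀ c : ℝ, c • x₀ = 0 → c • p x₀ = 0 := fun c hc => by
    have h := congrArg p hc
    rw [map_smul_eq_mul, map_zero, Real.norm_eq_abs, mul_eq_zero, abs_eq_zero] at h
    exact smul_eq_zero.mpr h
  set f := LinearPMap.mkSpanSingleton' (σ := RingHom.id ℝ) x₀ (p x₀) hker
  have hf : ∀ x : f.domain, f x ≤ p x := by
    rintro ⟨x, hx⟩
    obtain ⟨c, rfl⟩ := Submodule.mem_span_singleton.mp hx
    rw [LinearPMap.mkSpanSingleton'_apply, map_smul_eq_mul, Real.norm_eq_abs]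
    exact mul_le_mul_of_nonneg_right (le_abs_self c) (apply_nonneg p x₀)
  obtain ⟨g, hgf, hgp⟩ := Module.Dual.exists_extension_of_le_seminorm_real f.domain f.toFun hf
  refine ⟨g, ?_, hgp⟩
  have hx₀ : x₀ ∈ f.domain := Submodule.mem_span_singleton_self x₀
  exact (hgf ⟨x₀, hx₀⟩).trans (LinearPMap.mkSpanSingleton'_apply_self _ _ _ _)

namespace TwoNorm

theorem N_add_left_le (P : TwoNorm X) (x y b : X) : P.N (x + y) b ≤ P.N x b + P.N y b := by
  simpa only [P.symm _ b] using P.add_right b x y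

def seminorm (P : TwoNorm X) (b : X) : Seminorm ℝ X :=
  Seminorm.of (fun x => P.N x b) (fun x y => P.N_add_left_le x y b)
    (fun a x => by rw [P.smul_left, Real.norm_eq_abs])

@[simp]
theorem seminorm_apply (P : TwoNorm X) (b x : X) : P.seminorm b x = P.N x b := rfl

theorem N_nonneg (P : TwoNorm X) (x b : X) : 0 ≤ P.N x b := apply_nonneg (P.seminorm b) x

theorem bNorm_eq_of_abs_le_of_abs_eq (P : TwoNorm X) {b x₀ : X} {T : X →ₗ[ℝ] ℝ} {M : ℝ} (hM : 0 < M)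
    (hT : ∀ x, |T x| ≤ M * P.N x b) (hx₀ : |T x₀| = M * P.N x₀ b) (hb : P.N x₀ b ≠ 0) :
    P.bNorm b T = M := by
  have hpos : 0 < P.N x₀ b := (P.N_nonneg x₀ b).lt_of_ne' hb
  refine IsLeast.csInf_eq ⟨⟨hM, hT⟩, fun M' hM' => ?_⟩
  exact le_of_mul_le_mul_right (hx₀ ▸ hM'.2 x₀) hpos

end TwoNorm

theorem stmt15_general (P : TwoNorm X) (b : X) (x₀ : X)
    (hb : P.N x₀ b ≠ 0) :
    ∃ T : X →ₗ[ℝ] ℝ, P.BddB b T ∧ P.bNorm b T = 1 ∧ T x₀ = P.N x₀ b := by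
  obtain ⟨T, hTx₀, hT⟩ := (P.seminorm b).exists_dual_vector x₀
  simp only [TwoNorm.seminorm_apply] at hTx₀ hT
  have hT₁ : ∀ x, |T x| ≤ 1 * P.N x b := by simpa only [one_mul] using hT
  have hTx₀₁ : |T x₀| = 1 * P.N x₀ b := by rw [hTx₀, one_mul, abs_of_nonneg (P.N_nonneg x₀ b)]
  exact ⟨T, ⟨1, one_pos, hT₁⟩, P.bNorm_eq_of_abs_le_of_abs_eq one_pos hT₁ hTx₀₁ hb, hTx₀⟩

theorem stmt15 (P : TwoNorm X) (b : X) (x₀ : X) (h0 : x₀ ≠ 0)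
    (hb : P.N x₀ b ≠ 0) :
    ∃ T : X →ₗ[ℝ] ℝ, P.BddB b T ∧ P.bNorm b T = 1 ∧ T x₀ = P.N x₀ b :=
  stmt15_general P b x₀ hb
end
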